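/- arXiv:2406.02747 — 5 statements merged into one kernel-verified Lean document; each statement's English description precedes it below -/
import Mathlib

section
/- Let ψ₁(x) = (2(1+x)/x²)·log(1 + x²/(4(1+x))) and ψ₂(x) = (2 + x + (1+x)·log(1+x))/(2+x)². Then for all x ∈ (0, 0.4], ψ₂(x) > ψ₁(x). -/
set_option maxHeartbeats 2000000
open Real Set

noncomputable def ψ₁ (x : ℝ) : ℝ := (2 * (1 + x) / x ^ 2) * Real.log (1 + x ^ 2 / (4 * (1 + x)))

noncomputable def ψ₂ (x : ℝ) : ℝ := (2 + x + (1 + x) * Real.log (1 + x)) / (2 + x) ^ 2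

lemma log_taylor_lb {y : ℝ} (h0 : 0 < y) (h4 : y ≤ 2/5) :
    y - y^2/2 + y^3/3 - y^4/4 + y^5/5 - 5/3*y^6 ≤ Real.log (1 + y) := by
  have habs : |(-y)| < 1 := by rw [abs_neg, abs_of_pos h0]; linarith
  have h := Real.abs_log_sub_add_sum_range_le habs 5
  rw [abs_neg, abs_of_pos h0] at h
  simp only [Finset.sum_range_succ, Finset.sum_range_zero] at h
  rw [abs_le] at h
  have h1 := h.1
  have herr : y^6 / (1 - y) ≤ 5/3 * y^6 := by
    rw [div_le_iff₀ (by linarith)]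
    nlinarith [pow_pos h0 6]
  have hy : (1 : ℝ) - -y = 1 + y := by ring
  rw [hy] at h1
  push_cast at h1
  nlinarith [h1, herr]

lemma log_taylor_ub {u : ℝ} (h0 : 0 < u) (h35 : u ≤ 1/35) :
    Real.log (1 + u) ≤ u - u^2/2 + 35/34*u^3 := by
  have habs : |(-u)| < 1 := by rw [abs_neg, abs_of_pos h0]; linarith
  have h := Real.abs_log_sub_add_sum_range_le habs 2
  rw [abs_neg, abs_of_pos h0] at h
  simp only [Finset.sum_range_succ, Finset.sum_range_zero] at h
  rw [abs_le] at h
  have h2 := h.2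
  have herr : u^3 / (1 - u) ≤ 35/34 * u^3 := by
    rw [div_le_iff₀ (by linarith)]
    nlinarith [pow_pos h0 3]
  have hy : (1 : ℝ) - -u = 1 + u := by ring
  rw [hy] at h2
  push_cast at h2
  nlinarith [h2, herr]

theorem psi2_gt_psi1_on_small (x : ℝ) (hx : x ∈ Set.Ioc (0 : ℝ) 0.4) :
    ψ₂ x > ψ₁ x := by
  obtain ⟨hx0, hx4'⟩ := hx
  have hx4 : x ≤ 2/5 := by norm_num at hx4' ⊢; linarith
  have h1x : (0:ℝ) < 1 + x := by linarith
  have hu0 : 0 < x^2/(4*(1+x)) := by positivity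
  have hu35 : x^2/(4*(1+x)) ≤ 1/35 := by
    rw [div_le_div_iff₀ (by positivity) (by norm_num)]
    nlinarith
  have hlu := log_taylor_ub hu0 hu35
  have hlx := log_taylor_lb hx0 hx4
  have hA : ψ₁ x ≤ 1/2 - x^2/(16*(1+x)) + 35*x^4/(1088*(1+x)^2) := by
    unfold ψ₁
    calc (2*(1+x)/x^2) * Real.log (1 + x^2/(4*(1+x)))
        ≤ (2*(1+x)/x^2) * (x^2/(4*(1+x)) - (x^2/(4*(1+x)))^2/2 + 35/34*(x^2/(4*(1+x)))^3) :=
          mul_le_mul_of_nonneg_left hlu (by positivity)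
      _ = 1/2 - x^2/(16*(1+x)) + 35*x^4/(1088*(1+x)^2) := by
          field_simp
          ring
  have hB : 1/2 - x^2/(16*(1+x)) + 35*x^4/(1088*(1+x)^2) < ψ₂ x := by
    unfold ψ₂
    have key : 1/2 - x^2/(16*(1+x)) + 35*x^4/(1088*(1+x)^2)
        < (2 + x + (1+x)*(x - x^2/2 + x^3/3 - x^4/4 + x^5/5 - 5/3*x^6))/(2+x)^2 := by
      rw [← sub_pos]
      have e : (2 + x + (1+x)*(x - x^2/2 + x^3/3 - x^4/4 + x^5/5 - 5/3*x^6))/(2+x)^2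
          - (1/2 - x^2/(16*(1+x)) + 35*x^4/(1088*(1+x)^2))
          = x^2*(272 + 1088/3*x - 72*x^2 - 632/5*x^3 - 24733/15*x^4 - 25296/5*x^5
              - 26112/5*x^6 - 5440/3*x^7) / (1088*(1+x)^2*(2+x)^2) := by
        field_simp
        ring
      rw [e]
      apply div_pos
      · have hx2 : x^2 ≤ (2/5)*x := by nlinarith
        have hx3 : x^3 ≤ (2/5)*x^2 := by nlinarith
        have hx4p : x^4 ≤ (2/5)*x^3 := by nlinarith
        have hx5 : x^5 ≤ (2/5)*x^4 := by nlinarith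
        have hx6 : x^6 ≤ (2/5)*x^5 := by nlinarith
        have hx7 : x^7 ≤ (2/5)*x^6 := by nlinarith
        nlinarith [sq_nonneg x, pow_pos hx0 2]
      · positivity
    refine lt_of_lt_of_le key ?_
    gcongr
  linarith
end

section
/- Let ξ₀(s) = ∫₀¹ ((1−x)/(1+x))·s·x^{s−1} dx for s > 0. Then ξ₀ maps (0,∞) onto (0,1): ξ₀ is strictly decreasing, lim_{s→0⁺} ξ₀(s) = 1, and lim_{s→∞} ξ₀(s) = 0. -/
/-!
The substitution `u = x ^ s` gives `ξ₀ s = η (1 / s)` with `η t = ∫₀¹ cayley (u ^ t) du`, where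
`cayley y = (1 - y) / (1 + y)` is strictly decreasing on `[0, ∞)` with values in `[-1, 1]`. For
`0 < u < 1` the map `t ↦ u ^ t` is strictly decreasing, so `η` is strictly increasing; dominated
convergence makes `η` continuous with `η 0 = ∫₀¹ cayley 1 = 0` and `η t → ∫₀¹ cayley 0 = 1` as
`t → ∞`. A continuous strictly decreasing function on `(0, ∞)` maps it onto the open interval
between its two limits.
-/

open MeasureTheory Real Set Filter

noncomputable def ξ₀ (s : ℝ) : ℝ :=
  ∫ x in (0:ℝ)..1, ((1 - x) / (1 + x)) * (s * x ^ (s - 1))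

open Topology

theorem StrictAntiOn.image_Ioi_eq_Ioo {α δ : Type*} [ConditionallyCompleteLinearOrder α]
    [TopologicalSpace α] [OrderTopology α] [DenselyOrdered α] [NoMaxOrder α]
    [LinearOrder δ] [TopologicalSpace δ] [OrderClosedTopology δ]
    {f : α → δ} {a : α} {b c : δ} (hf : StrictAntiOn f (Ioi a)) (hcont : ContinuousOn f (Ioi a))
    (hright : Tendsto f (𝓝[>] a) (𝓝 c)) (htop : Tendsto f atTop (𝓝 b)) :
    f '' Ioi a = Ioo b c := by
  refine Subset.antisymm ?_ ?_
  · rintro _ ⟨s, hs, rfl⟩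
    obtain ⟨r, har, hrs⟩ := exists_between hs
    obtain ⟨t, hst⟩ := exists_gt s
    have ht : t ∈ Ioi a := lt_trans hs hst
    have hbt : b ≤ f t := le_of_tendsto htop <| (eventually_ge_atTop t).mono fun x hx =>
      hf.antitoneOn ht (ht.trans_le hx) hx
    have hrc : f r ≤ c := ge_of_tendsto hright <| eventually_of_mem (Ioo_mem_nhdsGT har)
      fun x hx => (hf hx.1 har hx.2).le
    exact ⟨hbt.trans_lt (hf hs ht hst), (hf har hs hrs).trans_le hrc⟩
  · exact isPreconnected_Ioi.intermediate_value_Ioo (le_principal_iff.2 (Ioi_mem_atTop a))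
      (le_principal_iff.2 self_mem_nhdsWithin) hcont htop hright

noncomputable def cayley (y : ℝ) : ℝ := (1 - y) / (1 + y)

lemma cayley_zero : cayley 0 = 1 := by norm_num [cayley]

lemma cayley_one : cayley 1 = 0 := by norm_num [cayley]

lemma strictAntiOn_cayley : StrictAntiOn cayley (Ici 0) := by
  intro x hx y hy hxy
  rw [mem_Ici] at hx hy
  rw [cayley, cayley, div_lt_div_iff₀ (by linarith) (by linarith)]
  nlinarith

lemma abs_cayley_le_one {y : ℝ} (hy : 0 ≤ y) : |cayley y| ≤ 1 := by
  rw [cayley, abs_div, abs_of_pos (by linarith : 0 < 1 + y), div_le_one (by linarith)]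
  exact abs_le.2 ⟨by linarith, by linarith⟩

lemma continuousOn_cayley : ContinuousOn cayley (Ici 0) :=
  (continuousOn_const.sub continuousOn_id).div (continuousOn_const.add continuousOn_id)
    fun y (hy : 0 ≤ y) => by positivity

lemma measurable_cayley : Measurable cayley := by
  unfold cayley
  fun_prop

noncomputable def η (t : ℝ) : ℝ := ∫ u in (0:ℝ)..1, cayley (u ^ t)

lemma eta_zero : η 0 = 0 := by simp [η, cayley_one]

lemma xi0_eq_eta_inv {s : ℝ} (hs : 0 < s) : ξ₀ s = η s⁻¹ := by
  have himage : (· ^ s) '' Ioo (0:ℝ) 1 = Ioo 0 1 := by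
    rw [(continuous_rpow_const hs.le).continuousOn.image_Ioo_of_strictMonoOn zero_le_one
      ((strictMonoOn_rpow_Ici_of_exponent_pos hs).mono Icc_subset_Ici_self),
      zero_rpow hs.ne', one_rpow]
  have hsubst := integral_image_eq_integral_abs_deriv_smul measurableSet_Ioo
    (fun x (hx : x ∈ Ioo (0:ℝ) 1) => (hasDerivAt_rpow_const (Or.inl hx.1.ne')).hasDerivWithinAt)
    ((rpow_left_injOn hs.ne').mono fun x hx => hx.1.le) fun u => cayley (u ^ s⁻¹)
  rw [himage] at hsubst
  rw [ξ₀, η, intervalIntegral.integral_of_le zero_le_one,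
    intervalIntegral.integral_of_le zero_le_one, integral_Ioc_eq_integral_Ioo,
    integral_Ioc_eq_integral_Ioo, hsubst]
  refine setIntegral_congr_fun measurableSet_Ioo fun x hx => ?_
  rw [smul_eq_mul, abs_of_nonneg (by have := hx.1; positivity), rpow_rpow_inv hx.1.le hs.ne',
    mul_comm]
  rfl

lemma continuousOn_cayley_rpow {t : ℝ} (ht : 0 ≤ t) :
    ContinuousOn (fun u : ℝ => cayley (u ^ t)) (Icc 0 1) :=
  continuousOn_cayley.comp (continuous_rpow_const ht).continuousOn
    fun _ hu => rpow_nonneg hu.1 t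

lemma strictMonoOn_eta : StrictMonoOn η (Ici 0) := by
  intro t₁ ht₁ t₂ ht₂ ht
  have hrpow : ∀ u ∈ Ioo (0:ℝ) 1, u ^ t₂ < u ^ t₁ := fun u hu =>
    rpow_lt_rpow_of_exponent_gt hu.1 hu.2 ht
  refine intervalIntegral.integral_lt_integral_of_continuousOn_of_le_of_exists_lt zero_lt_one
    (continuousOn_cayley_rpow ht₁) (continuousOn_cayley_rpow ht₂) (fun u hu => ?_)
    ⟨1 / 2, by norm_num, strictAntiOn_cayley (rpow_nonneg (by norm_num) _)
      (rpow_nonneg (by norm_num) _) (hrpow _ (by norm_num))⟩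
  rcases hu.2.lt_or_eq with hu1 | rfl
  · exact (strictAntiOn_cayley (rpow_nonneg hu.1.le _) (rpow_nonneg hu.1.le _)
      (hrpow u ⟨hu.1, hu1⟩)).le
  · simp

lemma tendsto_eta_of_tendsto_rpow {ι : Type*} {l : Filter ι} [l.IsCountablyGenerated] [l.NeBot]
    {t : ι → ℝ} {φ : ℝ → ℝ} (hφ : ∀ u ∈ Ioo (0:ℝ) 1, Tendsto (fun i => u ^ t i) l (𝓝 (φ u))) :
    Tendsto (fun i => η (t i)) l (𝓝 (∫ u in (0:ℝ)..1, cayley (φ u))) := by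
  refine intervalIntegral.tendsto_integral_filter_of_dominated_convergence (fun _ => 1)
    (.of_forall fun i => (measurable_cayley.comp (measurable_id.pow_const _)).aestronglyMeasurable)
    (.of_forall fun i => .of_forall fun u hu => ?_) intervalIntegrable_const ?_
  · rw [uIoc_of_le zero_le_one] at hu
    exact abs_cayley_le_one (rpow_nonneg hu.1.le _)
  · filter_upwards [volume.ae_ne 1] with u hu1 hu
    rw [uIoc_of_le zero_le_one] at hu
    have hu' : u ∈ Ioo (0:ℝ) 1 := ⟨hu.1, hu.2.lt_of_ne hu1⟩
    have hφ0 : 0 ≤ φ u := ge_of_tendsto' (hφ u hu') fun i => rpow_nonneg hu.1.le _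
    exact ((continuousOn_cayley.continuousWithinAt hφ0).tendsto.comp
      (tendsto_nhdsWithin_iff.2 ⟨hφ u hu', .of_forall fun i => rpow_nonneg hu.1.le _⟩))

lemma continuous_eta : Continuous η :=
  continuous_iff_continuousAt.2 fun _ =>
    tendsto_eta_of_tendsto_rpow (t := id) fun _ hu => (continuousAt_const_rpow hu.1.ne').tendsto

lemma tendsto_eta_atTop : Tendsto η atTop (𝓝 1) := by
  simpa [cayley_zero] using tendsto_eta_of_tendsto_rpow (t := id) (φ := 0)
    fun u hu => tendsto_rpow_atTop_of_base_lt_one u (by linarith [hu.1]) hu.2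

theorem xi0_maps_onto_Ioo :
    StrictAntiOn ξ₀ (Set.Ioi 0) ∧
    Tendsto ξ₀ (nhdsWithin 0 (Set.Ioi 0)) (nhds 1) ∧
    Tendsto ξ₀ atTop (nhds 0) ∧
    ξ₀ '' Set.Ioi 0 = Set.Ioo 0 1 := by
  have hξ : EqOn ξ₀ (η ∘ (·⁻¹)) (Ioi 0) := fun s hs => xi0_eq_eta_inv hs
  have hanti : StrictAntiOn ξ₀ (Ioi 0) := fun a (ha : 0 < a) b (hb : 0 < b) hab => by
    rw [xi0_eq_eta_inv ha, xi0_eq_eta_inv hb]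
    exact strictMonoOn_eta (inv_pos.2 hb).le (inv_pos.2 ha).le ((inv_lt_inv₀ hb ha).2 hab)
  have hcont : ContinuousOn ξ₀ (Ioi 0) :=
    (continuous_eta.comp_continuousOn (continuousOn_inv₀.mono fun s hs => ne_of_gt hs)).congr hξ
  have hright : Tendsto ξ₀ (𝓝[>] 0) (𝓝 1) :=
    (tendsto_eta_atTop.comp tendsto_inv_nhdsGT_zero).congr'
      (eventuallyEq_nhdsWithin_of_eqOn hξ).symm
  have htop : Tendsto ξ₀ atTop (𝓝 0) := by
    have := (continuous_eta.tendsto 0).comp tendsto_inv_atTop_zero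
    rw [eta_zero] at this
    exact this.congr' ((eventually_gt_atTop 0).mono fun s hs => (hξ hs).symm)
  exact ⟨hanti, hright, htop, hanti.image_Ioi_eq_Ioo hcont hright htop⟩
end

section
/- Let ξ₀(s) = ∫₀¹ ((1−x)/(1+x))·s·x^{s−1} dx for s > 0. Then the function ξ₂(s) := 2s·ξ₀(s) is strictly increasing on (0,∞). -/
open MeasureTheory Real Set

/-!
Substituting `u = x ^ s` gives `ξ₀ s = ∫₀¹ (1 - u ^ s⁻¹) / (1 + u ^ s⁻¹) du`. For `u ∈ (0, 1)` put
`a = -log u > 0`; then `s * (1 - u ^ s⁻¹) / (1 + u ^ s⁻¹) = s * tanh (a / (2 s)) = a * g (a / s)` with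
`g b = tanh (b / 2) / b = (exp b - 1) / (b * (exp b + 1))`. Since `sinh b > b`, `g` is strictly
decreasing on `(0, ∞)`, so the integrand of `2 s ξ₀ s` increases strictly with `s` at every `u`.
-/

theorem intervalIntegral_comp_rpow_zero_one {E : Type*} [NormedAddCommGroup E] [NormedSpace ℝ E]
    (g : ℝ → E) {p : ℝ} (hp : 0 < p) :
    ∫ x in (0:ℝ)..1, (p * x ^ (p - 1)) • g (x ^ p) = ∫ y in (0:ℝ)..1, g y := by
  -- the substitution over `(0, ∞)`, applied to `g` cut off at `1`
  have hsub := integral_comp_rpow_Ioi_of_pos (g := (Iic 1).indicator g) hp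
  rw [setIntegral_indicator measurableSet_Iic, Ioi_inter_Iic] at hsub
  rw [intervalIntegral.integral_of_le zero_le_one, intervalIntegral.integral_of_le zero_le_one,
    ← hsub, ← Ioi_inter_Iic, ← setIntegral_indicator measurableSet_Iic]
  refine setIntegral_congr_fun measurableSet_Ioi fun x hx ↦ ?_
  have hle : x ^ p ≤ 1 ↔ x ≤ 1 := by
    simpa using Real.rpow_le_rpow_iff (z := p) (le_of_lt hx) zero_le_one hp
  by_cases hx1 : x ≤ 1
  · simp [indicator_of_mem, hx1, hle.mpr hx1]
  · simp [indicator_of_notMem, hx1, mt hle.mp hx1]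

theorem xi0_eq_integral_rpow_inv {s : ℝ} (hs : 0 < s) :
    ξ₀ s = ∫ u in (0:ℝ)..1, (1 - u ^ s⁻¹) / (1 + u ^ s⁻¹) := by
  rw [← intervalIntegral_comp_rpow_zero_one _ hs, ξ₀]
  refine intervalIntegral.integral_congr fun x hx ↦ ?_
  rw [uIcc_of_le zero_le_one] at hx
  simp only [smul_eq_mul, ← rpow_mul hx.1, mul_inv_cancel₀ hs.ne', rpow_one, mul_comm]

theorem two_mul_mul_exp_lt_exp_sq_sub_one {b : ℝ} (hb : 0 < b) :
    2 * b * exp b < exp b ^ 2 - 1 := by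
  have hsinh : b < sinh b := self_lt_sinh_iff.mpr hb
  have hsub : exp b ^ 2 - 1 - 2 * b * exp b = 2 * exp b * (sinh b - b) := by
    rw [sinh_eq, exp_neg]
    field_simp
  nlinarith [exp_pos b]

theorem strictAntiOn_exp_sub_one_div :
    StrictAntiOn (fun b ↦ (exp b - 1) / (b * (exp b + 1))) (Ioi 0) := by
  have hderiv : ∀ b : ℝ, 0 < b → HasDerivAt (fun b ↦ (exp b - 1) / (b * (exp b + 1)))
      ((1 + 2 * b * exp b - exp b ^ 2) / (b * (exp b + 1)) ^ 2) b := fun b hb ↦ by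
    have hnum : HasDerivAt (fun b ↦ exp b - 1) (exp b) b := (hasDerivAt_exp b).sub_const 1
    have hden : HasDerivAt (fun b ↦ b * (exp b + 1)) (1 * (exp b + 1) + b * exp b) b :=
      (hasDerivAt_id' b).mul ((hasDerivAt_exp b).add_const 1)
    exact (hnum.div hden (mul_pos hb (by positivity)).ne').congr_deriv (by ring)
  refine strictAntiOn_of_hasDerivWithinAt_neg (convex_Ioi 0)
    (fun b hb ↦ (hderiv b hb).continuousAt.continuousWithinAt)
    (fun b hb ↦ (hderiv b (interior_subset hb)).hasDerivWithinAt) fun b hb ↦ ?_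
  rw [interior_Ioi, mem_Ioi] at hb
  have := two_mul_mul_exp_lt_exp_sq_sub_one hb
  exact div_neg_of_neg_of_pos (by linarith) (by positivity)

theorem mul_one_sub_rpow_inv_div_eq {s u : ℝ} (hs : 0 < s) (hu0 : 0 < u) (hu1 : u ≠ 1) :
    s * ((1 - u ^ s⁻¹) / (1 + u ^ s⁻¹)) =
      -log u * ((exp (-log u / s) - 1) / (-log u / s * (exp (-log u / s) + 1))) := by
  have hlog : log u ≠ 0 := log_ne_zero_of_pos_of_ne_one hu0 hu1
  have hrpow : u ^ s⁻¹ = (exp (-log u / s))⁻¹ := by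
    rw [rpow_def_of_pos hu0, ← exp_neg, neg_div, neg_neg, div_eq_mul_inv]
  rw [hrpow]
  field_simp

theorem strictMonoOn_mul_one_sub_rpow_inv_div {u : ℝ} (hu0 : 0 < u) (hu1 : u < 1) :
    StrictMonoOn (fun s ↦ s * ((1 - u ^ s⁻¹) / (1 + u ^ s⁻¹))) (Ioi 0) := by
  intro s hs t ht hst
  have ha : 0 < -log u := neg_pos.mpr (log_neg hu0 hu1)
  simp only [mul_one_sub_rpow_inv_div_eq hs hu0 hu1.ne, mul_one_sub_rpow_inv_div_eq ht hu0 hu1.ne]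
  exact mul_lt_mul_of_pos_left (strictAntiOn_exp_sub_one_div (div_pos ha ht) (div_pos ha hs)
    (div_lt_div_of_pos_left ha hs hst)) ha

theorem continuousOn_one_sub_rpow_div_one_add_rpow {q : ℝ} (hq : 0 ≤ q) :
    ContinuousOn (fun u : ℝ ↦ (1 - u ^ q) / (1 + u ^ q)) (Ici 0) := by
  have hpow := (continuous_rpow_const hq).continuousOn (s := Ici 0)
  exact (continuousOn_const.sub hpow).div (continuousOn_const.add hpow) fun u hu ↦
    (add_pos_of_pos_of_nonneg one_pos (rpow_nonneg hu q)).ne'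

theorem xi2_strictMono :
    StrictMonoOn (fun s => 2 * s * ξ₀ s) (Set.Ioi 0) := by
  intro s hs t ht hst
  have hxi2 : ∀ r : ℝ, 0 < r →
      2 * r * ξ₀ r = 2 * ∫ u in (0:ℝ)..1, r * ((1 - u ^ r⁻¹) / (1 + u ^ r⁻¹)) := fun r hr ↦ by
    rw [xi0_eq_integral_rpow_inv hr, intervalIntegral.integral_const_mul, mul_assoc]
  have hcont : ∀ r : ℝ, 0 < r →
      ContinuousOn (fun u : ℝ ↦ r * ((1 - u ^ r⁻¹) / (1 + u ^ r⁻¹))) (Icc 0 1) := fun r hr ↦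
    continuousOn_const.mul ((continuousOn_one_sub_rpow_div_one_add_rpow (inv_nonneg.mpr hr.le)).mono
      Icc_subset_Ici_self)
  have hlt : ∀ u ∈ Ioo (0:ℝ) 1, s * ((1 - u ^ s⁻¹) / (1 + u ^ s⁻¹)) <
      t * ((1 - u ^ t⁻¹) / (1 + u ^ t⁻¹)) := fun u hu ↦
    strictMonoOn_mul_one_sub_rpow_inv_div hu.1 hu.2 hs ht hst
  simp only [hxi2 s hs, hxi2 t ht]
  gcongr 2 * ?_
  refine intervalIntegral.integral_lt_integral_of_continuousOn_of_le_of_exists_lt zero_lt_one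
    (hcont s hs) (hcont t ht) (fun u hu ↦ ?_) ⟨1 / 2, by norm_num, hlt _ (by norm_num)⟩
  rcases hu.2.lt_or_eq with hu1 | rfl
  · exact (hlt u ⟨hu.1, hu1⟩).le
  · simp
end

section
/- Let q : 𝔻 → ℂ be holomorphic with q(0) = 1 and Re q(z) ≥ 0 on 𝔻, let s₁ > 0, t₁ ∈ [0,1), and define p(z) = t₁ + (1−t₁)·∫₀¹ q(xz)·s₁ x^{s₁−1} dx. Then for all z ∈ 𝔻, Re p(z) ≥ t₁ + (1−t₁)·∫₀¹ ((1−x|z|)/(1+x|z|))·s₁ x^{s₁−1} dx ≥ t₁ + (1−t₁)·ξ₀(s₁), where ξ₀(s₁) = ∫₀¹ ((1−x)/(1+x))·s₁ x^{s₁−1} dx. -/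
open Complex Set Metric MeasureTheory

/-!
The Cayley transform `(q - 1) / (q + 1)` of `q` maps the unit disk into the closed unit disk
and fixes `0`, so by the Schwarz lemma its value `u` at `w` satisfies `‖u‖ ≤ ‖w‖`. Inverting,
`q w = (1 + u) / (1 - u)`, whose real part `(1 - ‖u‖²) / ‖1 - u‖²` is at least
`(1 - ‖u‖) / (1 + ‖u‖) ≥ (1 - ‖w‖) / (1 + ‖w‖)`. Integrating against the nonnegative
weight `s x ^ (s - 1)` gives the first bound; the second holds because `(1 - r) / (1 + r)`
decreases in `r`.
-/

lemma antitoneOn_one_sub_div_one_add : AntitoneOn (fun r : ℝ => (1 - r) / (1 + r)) (Ici 0) := by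
  intro a ha b _ hab
  simp only [mem_Ici] at ha
  rw [div_le_div_iff₀ (by linarith) (by linarith)]
  nlinarith

lemma norm_sub_one_le_norm_add_one {z : ℂ} (hz : 0 ≤ z.re) : ‖z - 1‖ ≤ ‖z + 1‖ := by
  rw [← sq_le_sq₀ (norm_nonneg _) (norm_nonneg _), Complex.sq_norm, Complex.sq_norm]
  simp only [normSq_apply, sub_re, sub_im, add_re, add_im, one_re, one_im]
  nlinarith

lemma re_one_add_div_one_sub {u : ℂ} :
    ((1 + u) / (1 - u)).re = (1 - ‖u‖ ^ 2) / ‖1 - u‖ ^ 2 := by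
  rw [div_re, Complex.sq_norm, Complex.sq_norm]
  simp only [normSq_apply, add_re, add_im, sub_re, sub_im, one_re, one_im]
  ring

lemma one_sub_norm_div_one_add_norm_le_re {u : ℂ} (hu : ‖u‖ < 1) :
    (1 - ‖u‖) / (1 + ‖u‖) ≤ ((1 + u) / (1 - u)).re := by
  have hpos : 0 < ‖1 - u‖ := norm_pos_iff.2 fun h => by
    simp [← eq_of_sub_eq_zero h] at hu
  have hle : ‖1 - u‖ ≤ 1 + ‖u‖ := by simpa using norm_sub_le (1 : ℂ) u
  calc (1 - ‖u‖) / (1 + ‖u‖) = (1 - ‖u‖ ^ 2) / (1 + ‖u‖) ^ 2 := by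
        field_simp
        ring
    _ ≤ (1 - ‖u‖ ^ 2) / ‖1 - u‖ ^ 2 := by
        gcongr
        nlinarith [norm_nonneg u]
    _ = ((1 + u) / (1 - u)).re := re_one_add_div_one_sub.symm

theorem harnack_re_ge {q : ℂ → ℂ} (hq : DifferentiableOn ℂ q (ball 0 1)) (hq0 : q 0 = 1)
    (hqre : ∀ z ∈ ball (0 : ℂ) 1, 0 ≤ (q z).re) {w : ℂ} (hw : w ∈ ball (0 : ℂ) 1) :
    (1 - ‖w‖) / (1 + ‖w‖) ≤ (q w).re := by
  have hne : ∀ z ∈ ball (0 : ℂ) 1, q z + 1 ≠ 0 := fun z hz h => by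
    have := congrArg re h
    simp only [add_re, one_re, zero_re] at this
    linarith [hqre z hz]
  set f : ℂ → ℂ := fun z => (q z - 1) / (q z + 1) with hf
  have hfd : DifferentiableOn ℂ f (ball 0 1) := (hq.sub_const 1).div (hq.add_const 1) hne
  have hmaps : MapsTo f (ball 0 1) (closedBall 0 1) := fun z hz => by
    rw [mem_closedBall_zero_iff, hf, norm_div]
    exact div_le_one_of_le₀ (norm_sub_one_le_norm_add_one (hqre z hz)) (norm_nonneg _)
  have hf0 : f 0 = 0 := by simp [hf, hq0]
  have hfw : ‖f w‖ ≤ ‖w‖ :=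
    Complex.norm_le_norm_of_mapsTo_ball hfd hmaps hf0 (mem_ball_zero_iff.mp hw)
  have hqw : q w = (1 + f w) / (1 - f w) := by
    have := hne w hw
    simp only [hf]
    field_simp
    ring
  calc (1 - ‖w‖) / (1 + ‖w‖) ≤ (1 - ‖f w‖) / (1 + ‖f w‖) :=
        antitoneOn_one_sub_div_one_add (norm_nonneg _) (norm_nonneg _) hfw
    _ ≤ (q w).re :=
        hqw ▸ one_sub_norm_div_one_add_norm_le_re (hfw.trans_lt (mem_ball_zero_iff.mp hw))

lemma re_intervalIntegral_mul_ofReal {f : ℝ → ℂ} {g : ℝ → ℝ} {a b : ℝ}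
    (h : IntervalIntegrable (fun x => f x * (g x : ℂ)) volume a b) :
    (∫ x in a..b, f x * (g x : ℂ)).re = ∫ x in a..b, (f x).re * g x := by
  simpa only [reCLM_apply, re_mul_ofReal] using (reCLM.intervalIntegral_comp_comm h).symm

section Weighted

variable {w : ℝ → ℝ}

lemma intervalIntegrable_one_sub_div_one_add_mul (hw : IntervalIntegrable w volume 0 1) {r : ℝ}
    (hr : 0 ≤ r) :
    IntervalIntegrable (fun x => (1 - x * r) / (1 + x * r) * w x) volume 0 1 := by
  refine hw.continuousOn_mul (ContinuousOn.div (by fun_prop) (by fun_prop) fun x hx => ?_)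
  rw [uIcc_of_le zero_le_one] at hx
  nlinarith [hx.1]

lemma intervalIntegral_harnack_le_re (hw : IntervalIntegrable w volume 0 1)
    (hw0 : ∀ x ∈ Icc (0 : ℝ) 1, 0 ≤ w x) {q : ℂ → ℂ} (hq : DifferentiableOn ℂ q (ball 0 1))
    (hq0 : q 0 = 1) (hqre : ∀ z ∈ ball (0 : ℂ) 1, 0 ≤ (q z).re) {z : ℂ}
    (hz : z ∈ ball (0 : ℂ) 1) :
    ∫ x in (0 : ℝ)..1, (1 - x * ‖z‖) / (1 + x * ‖z‖) * w x
      ≤ (∫ x in (0 : ℝ)..1, q (x * z) * (w x : ℂ)).re := by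
  have hmem : ∀ x ∈ Icc (0 : ℝ) 1, (x : ℂ) * z ∈ ball (0 : ℂ) 1 := fun x hx => by
    rw [mem_ball_zero_iff, norm_mul, norm_real, Real.norm_of_nonneg hx.1]
    nlinarith [mem_ball_zero_iff.mp hz, norm_nonneg z, hx.2]
  have hqc : ContinuousOn (fun x : ℝ => q (x * z)) (uIcc 0 1) := by
    rw [uIcc_of_le zero_le_one]
    exact hq.continuousOn.comp (by fun_prop) hmem
  have hwc : IntervalIntegrable (fun x => (w x : ℂ)) volume 0 1 := ⟨hw.1.ofReal, hw.2.ofReal⟩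
  rw [re_intervalIntegral_mul_ofReal (hwc.continuousOn_mul hqc)]
  refine intervalIntegral.integral_mono_on zero_le_one
    (intervalIntegrable_one_sub_div_one_add_mul hw (norm_nonneg z))
    (hw.continuousOn_mul (continuous_re.comp_continuousOn hqc)) fun x hx =>
      mul_le_mul_of_nonneg_right ?_ (hw0 x hx)
  simpa [norm_mul, Real.norm_of_nonneg hx.1] using harnack_re_ge hq hq0 hqre (hmem x hx)

lemma intervalIntegral_one_sub_div_one_add_mul_mono (hw : IntervalIntegrable w volume 0 1)
    (hw0 : ∀ x ∈ Icc (0 : ℝ) 1, 0 ≤ w x) {r : ℝ} (hr0 : 0 ≤ r) (hr1 : r ≤ 1) :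
    ∫ x in (0 : ℝ)..1, (1 - x) / (1 + x) * w x
      ≤ ∫ x in (0 : ℝ)..1, (1 - x * r) / (1 + x * r) * w x := by
  refine intervalIntegral.integral_mono_on zero_le_one
    (by simpa using intervalIntegrable_one_sub_div_one_add_mul hw zero_le_one)
    (intervalIntegrable_one_sub_div_one_add_mul hw hr0) fun x hx =>
      mul_le_mul_of_nonneg_right (antitoneOn_one_sub_div_one_add (mul_nonneg hx.1 hr0) hx.1
        (mul_le_of_le_one_right hx.1 hr1)) (hw0 x hx)

end Weighted

theorem harnack_lower_bound (q : ℂ → ℂ)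
    (hq : DifferentiableOn ℂ q (Metric.ball (0 : ℂ) 1))
    (hq0 : q 0 = 1) (hqre : ∀ z ∈ Metric.ball (0 : ℂ) 1, 0 ≤ (q z).re)
    (s₁ t₁ : ℝ) (hs₁ : 0 < s₁) (ht₁ : t₁ ∈ Set.Ico (0:ℝ) 1)
    (p : ℂ → ℂ)
    (hp : ∀ z : ℂ, p z = (t₁ : ℂ) + (1 - (t₁ : ℂ)) *
        ∫ x in (0:ℝ)..1, q ((x : ℂ) * z) * ((s₁ * x ^ (s₁ - 1) : ℝ) : ℂ)) :
    ∀ z ∈ Metric.ball (0 : ℂ) 1,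
      (p z).re ≥ t₁ + (1 - t₁) *
          ∫ x in (0:ℝ)..1, ((1 - x * ‖z‖) / (1 + x * ‖z‖)) * (s₁ * x ^ (s₁ - 1)) ∧
      t₁ + (1 - t₁) *
          (∫ x in (0:ℝ)..1, ((1 - x * ‖z‖) / (1 + x * ‖z‖)) * (s₁ * x ^ (s₁ - 1)))
        ≥ t₁ + (1 - t₁) * ξ₀ s₁ := by
  intro z hz
  have hw : IntervalIntegrable (fun x : ℝ => s₁ * x ^ (s₁ - 1)) volume 0 1 :=
    (intervalIntegral.intervalIntegrable_rpow' (by linarith)).const_mul s₁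
  have hw0 : ∀ x ∈ Icc (0 : ℝ) 1, 0 ≤ s₁ * x ^ (s₁ - 1) := fun x hx =>
    mul_nonneg hs₁.le (Real.rpow_nonneg hx.1 _)
  have ht : 0 ≤ 1 - t₁ := sub_nonneg.2 ht₁.2.le
  have hre : (p z).re = t₁ + (1 - t₁) *
      (∫ x in (0:ℝ)..1, q ((x : ℂ) * z) * ((s₁ * x ^ (s₁ - 1) : ℝ) : ℂ)).re := by
    simp [hp]
  constructor
  · rw [hre]
    gcongr
    exact intervalIntegral_harnack_le_re hw hw0 hq hq0 hqre hz
  · rw [ξ₀]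
    gcongr
    exact intervalIntegral_one_sub_div_one_add_mul_mono hw hw0 (norm_nonneg z)
      (mem_ball_zero_iff.mp hz).le
end

section
/- Let ξ₀(s) = ∫₀¹ ((1−x)/(1+x))·s·x^{s−1} dx, fix s₀ > 0 and t₀ ∈ [0,1), and define F(s) = ∫_{s₀}^{s} ξ₀(σ)/σ dσ + log(1 − ξ₀(s₀) + s₀ξ₀(s₀)/s) for s ≥ s₀. Then F(s₀) = 0 and F′(s) < 0 for s > s₀; consequently, for all s > s₀, 1 − exp(−∫_{s₀}^{s} ξ₀(σ)/σ dσ) < (1 − s₀/s)·ξ₀(s₀). -/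
/-!
Integrating by parts, `ξ₀ s = 2 ∫₀¹ x^s/(1+x)² dx` and `1 - ξ₀ s = 2 s ∫₀¹ x^s/(1+x) dx`, so
`(1 - ξ₀ s)/(s ξ₀ s)` is a ratio of two moments of `x^s`. This ratio is strictly increasing:
written as a double integral and symmetrized in `(x, y)`, the difference of cross products has
integrand `(x^s y^t - x^t y^s) (y - x) / ((1+x)² (1+y)²) ≥ 0` (Chebyshev's argument).
After clearing denominators, `F' s < 0` is exactly this monotonicity between `s₀` and `s`;
as `F s₀ = 0`, `F s < 0` for `s > s₀`, and exponentiating gives the final inequality.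
-/

open MeasureTheory Real Set

noncomputable def F (s₀ t₀ : ℝ) (s : ℝ) : ℝ :=
  (∫ σ in s₀..s, ξ₀ σ / σ) + Real.log (1 - ξ₀ s₀ + s₀ * ξ₀ s₀ / s)

open Filter

section Symmetrization

variable {α : Type*} {p q a b : α → ℝ}

noncomputable def antisymmKernel (p q a b : α → ℝ) (z : α × α) : ℝ :=
  (p z.1 * q z.2 - q z.1 * p z.2) * (a z.1 * b z.2 - b z.1 * a z.2)

theorem antisymmKernel_eq (z : α × α) : antisymmKernel p q a b z =
    (p z.1 * a z.1) * (q z.2 * b z.2) - (p z.1 * b z.1) * (q z.2 * a z.2) -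
      ((q z.1 * a z.1) * (p z.2 * b z.2) - (q z.1 * b z.1) * (p z.2 * a z.2)) := by
  rw [antisymmKernel]
  ring

theorem antisymmKernel_swap (z : α × α) :
    antisymmKernel p q a b z.swap = antisymmKernel p q a b z := by
  simp only [antisymmKernel, Prod.fst_swap, Prod.snd_swap]
  ring

theorem antisymmKernel_diag (x : α) : antisymmKernel p q a b (x, x) = 0 := by
  rw [antisymmKernel, mul_comm (p x), sub_self, zero_mul]

variable [MeasurableSpace α] {μ : Measure α}

theorem integrable_antisymmKernel
    (hpa : Integrable (fun x ↦ p x * a x) μ) (hqb : Integrable (fun x ↦ q x * b x) μ)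
    (hqa : Integrable (fun x ↦ q x * a x) μ) (hpb : Integrable (fun x ↦ p x * b x) μ) :
    Integrable (antisymmKernel p q a b) (μ.prod μ) :=
  (((hpa.mul_prod hqb).sub (hpb.mul_prod hqa)).sub
    ((hqa.mul_prod hpb).sub (hqb.mul_prod hpa))).congr
    (Eventually.of_forall fun z ↦ (antisymmKernel_eq z).symm)

variable [SigmaFinite μ]

theorem two_mul_integral_mul_sub_eq_integral_antisymmKernel
    (hpa : Integrable (fun x ↦ p x * a x) μ) (hqb : Integrable (fun x ↦ q x * b x) μ)
    (hqa : Integrable (fun x ↦ q x * a x) μ) (hpb : Integrable (fun x ↦ p x * b x) μ) :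
    2 * ((∫ x, p x * a x ∂μ) * (∫ x, q x * b x ∂μ) - (∫ x, q x * a x ∂μ) * (∫ x, p x * b x ∂μ)) =
      ∫ z, antisymmKernel p q a b z ∂μ.prod μ := by
  have h₁ := hpa.mul_prod hqb
  have h₂ := hpb.mul_prod hqa
  have h₃ := hqa.mul_prod hpb
  have h₄ := hqb.mul_prod hpa
  simp only [antisymmKernel_eq]
  rw [integral_sub (by exact h₁.sub h₂) (by exact h₃.sub h₄), integral_sub h₁ h₂,
    integral_sub h₃ h₄, integral_prod_mul (fun x ↦ p x * a x) (fun x ↦ q x * b x),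
    integral_prod_mul (fun x ↦ p x * b x) (fun x ↦ q x * a x),
    integral_prod_mul (fun x ↦ q x * a x) (fun x ↦ p x * b x),
    integral_prod_mul (fun x ↦ q x * b x) (fun x ↦ p x * a x)]
  ring

theorem integral_mul_integral_lt_of_antisymmKernel_pos
    (hpa : Integrable (fun x ↦ p x * a x) μ) (hqb : Integrable (fun x ↦ q x * b x) μ)
    (hqa : Integrable (fun x ↦ q x * a x) μ) (hpb : Integrable (fun x ↦ p x * b x) μ)
    (h_nonneg : ∀ᵐ z ∂μ.prod μ, 0 ≤ antisymmKernel p q a b z)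
    (h_pos : 0 < μ.prod μ (Function.support (antisymmKernel p q a b))) :
    (∫ x, q x * a x ∂μ) * (∫ x, p x * b x ∂μ) < (∫ x, p x * a x ∂μ) * (∫ x, q x * b x ∂μ) := by
  have := two_mul_integral_mul_sub_eq_integral_antisymmKernel hpa hqb hqa hpb
  have := (integral_pos_iff_support_of_nonneg_ae h_nonneg
    (integrable_antisymmKernel hpa hqb hqa hpb)).2 h_pos
  linarith

end Symmetrization

theorem rpow_mul_rpow_sub_rpow_mul_rpow_pos {x y s t : ℝ} (hx : 0 < x) (hxy : x < y)
    (hst : s < t) : 0 < x ^ s * y ^ t - x ^ t * y ^ s := by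
  have hy : 0 < y := hx.trans hxy
  have factor : x ^ s * y ^ t - x ^ t * y ^ s = x ^ s * y ^ s * (y ^ (t - s) - x ^ (t - s)) := by
    rw [rpow_sub hx, rpow_sub hy]
    field_simp
  rw [factor]
  have := rpow_lt_rpow hx.le hxy (sub_pos.2 hst)
  have := rpow_pos_of_pos hx s
  have := rpow_pos_of_pos hy s
  positivity

theorem antisymmKernel_rpow_inv_one_add_pos {x y s t : ℝ} (hx : 0 < x) (hxy : x < y)
    (hst : s < t) : 0 < antisymmKernel (· ^ s) (· ^ t) (fun x ↦ ((1 + x) ^ 2)⁻¹)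
      (fun x ↦ (1 + x)⁻¹) (x, y) := by
  have hy : 0 < y := hx.trans hxy
  have weights : ((1 + x) ^ 2)⁻¹ * (1 + y)⁻¹ - (1 + x)⁻¹ * ((1 + y) ^ 2)⁻¹ =
      (y - x) / ((1 + x) ^ 2 * (1 + y) ^ 2) := by
    field_simp
    ring
  rw [antisymmKernel, weights]
  have := rpow_mul_rpow_sub_rpow_mul_rpow_pos hx hxy hst
  have := sub_pos.2 hxy
  positivity

theorem antisymmKernel_rpow_inv_one_add_nonneg {x y s t : ℝ} (hx : 0 < x) (hy : 0 < y)
    (hst : s < t) : 0 ≤ antisymmKernel (· ^ s) (· ^ t) (fun x ↦ ((1 + x) ^ 2)⁻¹)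
      (fun x ↦ (1 + x)⁻¹) (x, y) := by
  rcases lt_trichotomy x y with hxy | rfl | hyx
  · exact (antisymmKernel_rpow_inv_one_add_pos hx hxy hst).le
  · rw [antisymmKernel_diag]
  · exact antisymmKernel_swap (x, y) ▸ (antisymmKernel_rpow_inv_one_add_pos hy hyx hst).le

noncomputable def momentOnePlus (k : ℕ) (s : ℝ) : ℝ :=
  ∫ x in (0:ℝ)..1, x ^ s / (1 + x) ^ k

section momentOnePlus

variable {k : ℕ} {s t : ℝ}

theorem intervalIntegrable_rpow_div_one_add_pow (hs : 0 ≤ s) :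
    IntervalIntegrable (fun x : ℝ ↦ x ^ s / (1 + x) ^ k) volume 0 1 :=
  ((continuous_rpow_const hs).continuousOn.div (by fun_prop)
    fun x hx ↦ pow_ne_zero k (by linarith [hx.1])).intervalIntegrable_of_Icc zero_le_one

theorem momentOnePlus_pos (hs : 0 ≤ s) : 0 < momentOnePlus k s :=
  intervalIntegral.intervalIntegral_pos_of_pos_on (intervalIntegrable_rpow_div_one_add_pow hs)
    (fun x hx ↦ div_pos (rpow_pos_of_pos hx.1 s) (pow_pos (by linarith [hx.1]) k)) zero_lt_one

theorem continuousAt_momentOnePlus (hs : 0 < s) : ContinuousAt (momentOnePlus k) s := by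
  refine intervalIntegral.continuousAt_of_dominated_interval (bound := fun _ ↦ 1)
    (Eventually.of_forall fun t ↦ ?_) ?_ intervalIntegrable_const ?_
  · exact (by fun_prop : Measurable fun x : ℝ ↦ x ^ t / (1 + x) ^ k).aestronglyMeasurable
  · filter_upwards [Ioi_mem_nhds hs] with t ht
    refine Eventually.of_forall fun x hx ↦ ?_
    rw [uIoc_of_le zero_le_one] at hx
    have hx₀ : 0 < 1 + x := by linarith [hx.1]
    rw [norm_of_nonneg (div_nonneg (rpow_nonneg hx.1.le t) (pow_nonneg hx₀.le k))]
    exact div_le_one_of_le₀ ((rpow_le_one hx.1.le hx.2 ht.le).trans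
      (one_le_pow₀ (le_add_of_nonneg_right hx.1.le))) (pow_nonneg hx₀.le k)
  · refine Eventually.of_forall fun x hx ↦ ?_
    rw [uIoc_of_le zero_le_one] at hx
    exact (continuousAt_const_rpow hx.1.ne').div_const _

theorem momentOnePlus_eq_setIntegral :
    momentOnePlus k s = ∫ x in Ioc 0 1, x ^ s * ((1 + x) ^ k)⁻¹ := by
  simp only [momentOnePlus, intervalIntegral.integral_of_le zero_le_one, div_eq_mul_inv]

theorem integrableOn_rpow_mul_inv_one_add_pow (hs : 0 ≤ s) :
    IntegrableOn (fun x : ℝ ↦ x ^ s * ((1 + x) ^ k)⁻¹) (Ioc 0 1) := by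
  simpa only [div_eq_mul_inv] using (intervalIntegrable_rpow_div_one_add_pow (k := k) hs).1

theorem momentOnePlus_two_mul_momentOnePlus_one_lt (hs : 0 ≤ s) (hst : s < t) :
    momentOnePlus 2 t * momentOnePlus 1 s < momentOnePlus 2 s * momentOnePlus 1 t := by
  have ht : 0 ≤ t := hs.trans hst.le
  have integrable {r : ℝ} (hr : 0 ≤ r) :
      IntegrableOn (fun x : ℝ ↦ x ^ r * (1 + x)⁻¹) (Ioc 0 1) := by
    simpa only [pow_one] using integrableOn_rpow_mul_inv_one_add_pow (k := 1) hr
  have square_pos : 0 < (volume.restrict (Ioc (0:ℝ) 1)).prod (volume.restrict (Ioc (0:ℝ) 1))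
      (Ioo (0:ℝ) (1 / 2) ×ˢ Ioo (1 / 2) 1) := by
    rw [Measure.prod_prod,
      Measure.restrict_eq_self _ (Ioo_subset_Ioc_self.trans (Ioc_subset_Ioc_right (by norm_num))),
      Measure.restrict_eq_self _ (Ioo_subset_Ioc_self.trans (Ioc_subset_Ioc_left (by norm_num)))]
    norm_num
  have := integral_mul_integral_lt_of_antisymmKernel_pos (μ := volume.restrict (Ioc (0:ℝ) 1))
    (p := (· ^ s)) (q := (· ^ t)) (a := fun x ↦ ((1 + x) ^ 2)⁻¹)
    (b := fun x ↦ (1 + x)⁻¹)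
    (integrableOn_rpow_mul_inv_one_add_pow hs) (integrable ht)
    (integrableOn_rpow_mul_inv_one_add_pow ht) (integrable hs)
    (by
      rw [Measure.prod_restrict]
      filter_upwards [ae_restrict_mem (measurableSet_Ioc.prod measurableSet_Ioc)] with z hz
      exact antisymmKernel_rpow_inv_one_add_nonneg hz.1.1 hz.2.1 hst)
    (square_pos.trans_le (measure_mono fun z hz ↦
      (antisymmKernel_rpow_inv_one_add_pos hz.1.1 (hz.1.2.trans hz.2.1) hst).ne'))
  simpa only [momentOnePlus_eq_setIntegral, pow_one] using this

end momentOnePlus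

section ξ₀

variable {s : ℝ}

theorem ξ₀_eq_two_mul_momentOnePlus (hs : 0 < s) : ξ₀ s = 2 * momentOnePlus 2 s := by
  have one_add_pos {x : ℝ} (hx : x ∈ uIcc (0:ℝ) 1) : 0 < 1 + x := by
    rw [uIcc_of_le zero_le_one] at hx
    linarith [hx.1]
  have u_deriv {x : ℝ} (hx : x ∈ uIcc (0:ℝ) 1) :
      HasDerivAt (fun x : ℝ ↦ (1 - x) / (1 + x)) (-2 / (1 + x) ^ 2) x := by
    refine (((hasDerivAt_id x).const_sub 1).div ((hasDerivAt_id x).const_add 1)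
      (one_add_pos hx).ne').congr_deriv ?_
    simp only [id]
    ring
  have parts := intervalIntegral.integral_mul_deriv_eq_deriv_mul_of_hasDerivAt
    (u := fun x : ℝ ↦ (1 - x) / (1 + x)) (u' := fun x ↦ -2 / (1 + x) ^ 2)
    (v := fun x : ℝ ↦ x ^ s) (v' := fun x ↦ s * x ^ (s - 1)) (a := 0) (b := 1)
    (fun x hx ↦ (u_deriv hx).continuousAt.continuousWithinAt)
    (continuous_rpow_const hs.le).continuousOn
    (fun x hx ↦ u_deriv (Ioo_subset_Icc_self hx))
    (fun x hx ↦ hasDerivAt_rpow_const (Or.inl (by simpa using hx.1 : (0:ℝ) < x).ne'))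
    (continuousOn_const.div (by fun_prop) fun x hx ↦
      (pow_pos (one_add_pos hx) 2).ne').intervalIntegrable
    ((intervalIntegral.intervalIntegrable_rpow' (by linarith)).const_mul s)
  have : ∀ x : ℝ, -2 / (1 + x) ^ 2 * x ^ s = -2 * (x ^ s / (1 + x) ^ 2) := fun x ↦ by ring
  simp only [this, intervalIntegral.integral_const_mul] at parts
  rw [ξ₀, parts, momentOnePlus, zero_rpow hs.ne']
  norm_num

theorem one_sub_ξ₀_eq (hs : 0 < s) : 1 - ξ₀ s = 2 * s * momentOnePlus 1 s := by
  have integrand : ∀ x ∈ uIoc (0:ℝ) 1,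
      (1 - x) / (1 + x) * (s * x ^ (s - 1)) = s * x ^ (s - 1) - 2 * s * (x ^ s / (1 + x) ^ 1) := by
    intro x hx
    rw [uIoc_of_le zero_le_one] at hx
    have one_add_pos : 0 < 1 + x := by linarith [hx.1]
    have x_ne : x ≠ 0 := hx.1.ne'
    rw [rpow_sub_one x_ne]
    field_simp
    ring
  have total : ∫ x in (0:ℝ)..1, s * x ^ (s - 1) = 1 := by
    rw [intervalIntegral.integral_const_mul, integral_rpow (Or.inl (by linarith)), sub_add_cancel,
      one_rpow, zero_rpow hs.ne', sub_zero, mul_one_div_cancel hs.ne']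
  rw [ξ₀, intervalIntegral.integral_congr_ae (Eventually.of_forall integrand),
    intervalIntegral.integral_sub
      ((intervalIntegral.intervalIntegrable_rpow' (by linarith)).const_mul s)
      ((intervalIntegrable_rpow_div_one_add_pow hs.le).const_mul _),
    total, intervalIntegral.integral_const_mul, momentOnePlus]
  ring

theorem ξ₀_pos (hs : 0 < s) : 0 < ξ₀ s := by
  rw [ξ₀_eq_two_mul_momentOnePlus hs]
  exact mul_pos two_pos (momentOnePlus_pos hs.le)

theorem ξ₀_lt_one (hs : 0 < s) : ξ₀ s < 1 := by
  have := one_sub_ξ₀_eq hs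
  have := mul_pos (mul_pos two_pos hs) (momentOnePlus_pos (k := 1) hs.le)
  linarith

theorem continuousOn_ξ₀ : ContinuousOn ξ₀ (Ioi 0) := fun _ hs ↦
  ContinuousAt.continuousWithinAt <| ((continuousAt_momentOnePlus (k := 2) hs).const_mul 2).congr
    (eventually_of_mem (Ioi_mem_nhds hs) fun _ ht ↦ (ξ₀_eq_two_mul_momentOnePlus ht).symm)

theorem strictMonoOn_one_sub_ξ₀_div : StrictMonoOn (fun s ↦ (1 - ξ₀ s) / (s * ξ₀ s)) (Ioi 0) := by
  have ratio {s : ℝ} (hs : 0 < s) :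
      (1 - ξ₀ s) / (s * ξ₀ s) = momentOnePlus 1 s / momentOnePlus 2 s := by
    rw [one_sub_ξ₀_eq hs, ξ₀_eq_two_mul_momentOnePlus hs]
    have := (momentOnePlus_pos (k := 2) hs.le).ne'
    field_simp
  intro s hs t ht hst
  simp only [ratio hs, ratio ht]
  rw [div_lt_div_iff₀ (momentOnePlus_pos hs.le) (momentOnePlus_pos ht.le)]
  linarith [momentOnePlus_two_mul_momentOnePlus_one_lt (le_of_lt hs) hst]

end ξ₀

section F

variable {s₀ s : ℝ}

theorem F_self (t₀ : ℝ) (hs₀ : 0 < s₀) : F s₀ t₀ s₀ = 0 := by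
  rw [F, intervalIntegral.integral_same, mul_div_cancel_left₀ _ hs₀.ne', sub_add_cancel, log_one,
    add_zero]

theorem one_sub_ξ₀_add_pos (hs₀ : 0 < s₀) (hs : 0 < s) : 0 < 1 - ξ₀ s₀ + s₀ * ξ₀ s₀ / s := by
  have := ξ₀_lt_one hs₀
  have : 0 < s₀ * ξ₀ s₀ / s := by have := ξ₀_pos hs₀; positivity
  linarith

theorem hasDerivAt_F (t₀ : ℝ) (hs₀ : 0 < s₀) (hs : 0 < s) :
    HasDerivAt (F s₀ t₀) (ξ₀ s / s - s₀ * ξ₀ s₀ / (s * (s * (1 - ξ₀ s₀) + s₀ * ξ₀ s₀))) s := by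
  have integral_deriv : HasDerivAt (fun v ↦ ∫ σ in s₀..v, ξ₀ σ / σ) (ξ₀ s / s) s := by
    have cont : ContinuousOn (fun σ ↦ ξ₀ σ / σ) (Ioi 0) :=
      continuousOn_ξ₀.div continuousOn_id fun σ hσ ↦ (mem_Ioi.1 hσ).ne'
    refine intervalIntegral.integral_hasDerivAt_right ?_
      (cont.stronglyMeasurableAtFilter isOpen_Ioi s hs) (cont.continuousAt (Ioi_mem_nhds hs))
    exact (cont.mono fun σ hσ ↦ (lt_min hs₀ hs).trans_le hσ.1).intervalIntegrable
  have log_deriv := ((hasDerivAt_inv hs.ne').const_mul (s₀ * ξ₀ s₀) |>.const_add (1 - ξ₀ s₀)).log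
    (one_sub_ξ₀_add_pos hs₀ hs).ne'
  refine (integral_deriv.add log_deriv).congr_deriv ?_
  have := (one_sub_ξ₀_add_pos hs₀ hs).ne'
  field_simp
  ring

theorem deriv_F_neg (t₀ : ℝ) (hs₀ : 0 < s₀) (hs : s₀ < s) : deriv (F s₀ t₀) s < 0 := by
  have hs' : 0 < s := hs₀.trans hs
  have := ξ₀_pos hs₀
  have := ξ₀_pos hs'
  have := sub_pos.2 (ξ₀_lt_one hs₀)
  have ratio_lt := strictMonoOn_one_sub_ξ₀_div hs₀ hs' hs
  rw [div_lt_div_iff₀ (by positivity) (by positivity)] at ratio_lt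
  rw [(hasDerivAt_F t₀ hs₀ hs').deriv, sub_neg, div_lt_div_iff₀ hs' (by positivity)]
  nlinarith

theorem F_neg (t₀ : ℝ) (hs₀ : 0 < s₀) (hs : s₀ < s) : F s₀ t₀ s < 0 := by
  have anti : StrictAntiOn (F s₀ t₀) (Icc s₀ s) :=
    strictAntiOn_of_deriv_neg (convex_Icc s₀ s)
      (fun u hu ↦ (hasDerivAt_F t₀ hs₀ (hs₀.trans_le hu.1)).continuousAt.continuousWithinAt)
      fun u hu ↦ deriv_F_neg t₀ hs₀ (interior_Icc (a := s₀) ▸ hu).1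
  exact F_self t₀ hs₀ ▸ anti (left_mem_Icc.2 hs.le) (right_mem_Icc.2 hs.le) hs

end F

theorem forward_curve_comparison_general (s₀ : ℝ) (hs₀ : 0 < s₀) (t₀ : ℝ) :
    F s₀ t₀ s₀ = 0 ∧
    (∀ s : ℝ, s₀ < s → deriv (F s₀ t₀) s < 0) ∧
    (∀ s : ℝ, s₀ < s →
      1 - Real.exp (-∫ σ in s₀..s, ξ₀ σ / σ) < (1 - s₀ / s) * ξ₀ s₀) := by
  refine ⟨F_self t₀ hs₀, fun s hs ↦ deriv_F_neg t₀ hs₀ hs, fun s hs ↦ ?_⟩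
  have exp_bound : 1 - ξ₀ s₀ + s₀ * ξ₀ s₀ / s < exp (-∫ σ in s₀..s, ξ₀ σ / σ) := by
    rw [← exp_log (one_sub_ξ₀_add_pos hs₀ (hs₀.trans hs)), exp_lt_exp]
    have := F_neg t₀ hs₀ hs
    rw [F] at this
    linarith
  calc 1 - exp (-∫ σ in s₀..s, ξ₀ σ / σ) < ξ₀ s₀ - s₀ * ξ₀ s₀ / s := by linarith
    _ = (1 - s₀ / s) * ξ₀ s₀ := by ring

theorem forward_curve_comparison (s₀ : ℝ) (hs₀ : 0 < s₀) (t₀ : ℝ)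
    (ht₀ : t₀ ∈ Set.Ico (0:ℝ) 1) :
    F s₀ t₀ s₀ = 0 ∧
    (∀ s : ℝ, s₀ < s → deriv (F s₀ t₀) s < 0) ∧
    (∀ s : ℝ, s₀ < s →
      1 - Real.exp (-∫ σ in s₀..s, ξ₀ σ / σ) < (1 - s₀ / s) * ξ₀ s₀) :=
  forward_curve_comparison_general s₀ hs₀ t₀
end
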